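/- arXiv:2404.17297 — 5 statements merged into one kernel-verified Lean document; each statement's English description precedes it below -/
import Mathlib

section
/- (Bekić's theorem) Let A₁ and A₂ be complete lattices and let f : A₁ × A₂ → A₁ and g : A₁ × A₂ → A₂ be monotone functions. Then the least fixed point of the map (x, y) ↦ (lfp (x₀ ↦ f(x₀, y)), lfp (y₀ ↦ g(x, y₀))) equals the least fixed point of the map (x, y) ↦ (f(x, y), g(x, y)). -/
/-!
The fixed points of the Bekić map `p ↦ (lfp (f (·, p.2)), lfp (g (p.1, ·)))` are fixed points
of `(f, g)`, and every prefixed point of `(f, g)` is a prefixed point of the Bekić map. The first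
fact bounds `lfp (f, g)` by the least fixed point of the Bekić map, the second gives the converse.
-/

/-- Knaster–Tarski least fixed point of a function on a complete lattice. -/
def klfp {α : Type*} [CompleteLattice α] (F : α → α) : α :=
  sInf {x | F x ≤ x}

section klfp

variable {α : Type*} [CompleteLattice α] {F G : α → α}

theorem klfp_le {x : α} (h : F x ≤ x) : klfp F ≤ x :=
  sInf_le h

theorem klfp_le_klfp (h : ∀ x, G x ≤ x → F x ≤ x) : klfp F ≤ klfp G :=
  sInf_le_sInf h

theorem klfp_mono (h : F ≤ G) : klfp F ≤ klfp G :=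
  klfp_le_klfp fun x hx => (h x).trans hx

theorem Monotone.map_klfp (hF : Monotone F) : F (klfp F) = klfp F :=
  OrderHom.map_lfp ⟨F, hF⟩

end klfp

section bekicMap

variable {A₁ A₂ : Type*} [CompleteLattice A₁] [CompleteLattice A₂]
  {f : A₁ × A₂ → A₁} {g : A₁ × A₂ → A₂}

variable (f g) in
def bekicMap (p : A₁ × A₂) : A₁ × A₂ :=
  (klfp (fun x₀ => f (x₀, p.2)), klfp (fun y₀ => g (p.1, y₀)))

theorem bekicMap_le_of_le {p : A₁ × A₂} (h : (f p, g p) ≤ p) : bekicMap f g p ≤ p :=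
  ⟨klfp_le h.1, klfp_le h.2⟩

theorem monotone_bekicMap (hf : Monotone f) (hg : Monotone g) : Monotone (bekicMap f g) :=
  fun _ _ h => ⟨klfp_mono fun _ => hf ⟨le_rfl, h.2⟩, klfp_mono fun _ => hg ⟨h.1, le_rfl⟩⟩

theorem eq_of_bekicMap_eq (hf : Monotone f) (hg : Monotone g) {p : A₁ × A₂}
    (hp : bekicMap f g p = p) : (f p, g p) = p := by
  obtain ⟨x, y⟩ := p
  obtain ⟨hx, hy⟩ := Prod.mk.inj hp
  have hfx : f (x, y) = x := by
    rw [← hx]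
    exact ((monotone_prod_iff.1 hf).2 y).map_klfp
  have hgy : g (x, y) = y := by
    rw [← hy]
    exact ((monotone_prod_iff.1 hg).1 x).map_klfp
  rw [hfx, hgy]

end bekicMap

/-- Bekić's theorem. -/
theorem bekic {A₁ A₂ : Type*} [CompleteLattice A₁] [CompleteLattice A₂]
    (f : A₁ × A₂ → A₁) (g : A₁ × A₂ → A₂)
    (hf : Monotone f) (hg : Monotone g) :
    klfp (fun p : A₁ × A₂ =>
        (klfp (fun x₀ => f (x₀, p.2)), klfp (fun y₀ => g (p.1, y₀))))
      = klfp (fun p : A₁ × A₂ => (f p, g p)) := by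
  change klfp (bekicMap f g) = _
  refine le_antisymm (klfp_le_klfp fun p => bekicMap_le_of_le) (klfp_le ?_)
  exact (eq_of_bekicMap_eq hf hg (monotone_bekicMap hf hg).map_klfp).le
end

section
/- While-loop refinement for abort-extended semantics: define γ_N(N, E) = N ∪ (E × state) for N ⊆ state × state, E ⊆ state, and γ_D(N, E) = N ∪ E for N, E ⊆ state. Suppose N_t ⊆ γ_N(N_s, E_s), D_t ⊆ γ_D(D_s, E_s), and E_t ⊆ E_s. Let tst be a subset of state and let test(tst) = {(σ,σ) | σ ∈ tst}. Then (test(tst) ∘ N_t)* ∘ test(ffs) ⊆ γ_N((test(tst) ∘ N_s)* ∘ test(ffs), (test(tst) ∘ N_s)* ∘ E_s') for appropriate E_s' = E_s, where * is reflexive transitive closure and ffs ⊆ state. -/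
/-- Composition of binary relations. -/
def relComp {σ : Type*} (R₁ R₂ : Set (σ × σ)) : Set (σ × σ) :=
  {p | ∃ σ₂, (p.1, σ₂) ∈ R₁ ∧ (σ₂, p.2) ∈ R₂}

/-- Action of a relation on a set. -/
def relApp {σ : Type*} (R : Set (σ × σ)) (X : Set σ) : Set σ :=
  {σ₁ | ∃ σ₂, (σ₁, σ₂) ∈ R ∧ σ₂ ∈ X}

/-- Reflexive transitive closure. -/
def relStar {σ : Type*} (X : Set (σ × σ)) : Set (σ × σ) :=
  {p | Relation.ReflTransGen (fun a b => (a, b) ∈ X) p.1 p.2}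

/-- Test relation: identity restricted to a set. -/
def test {σ : Type*} (X : Set σ) : Set (σ × σ) :=
  {p | p.1 ∈ X ∧ p.1 = p.2}

/-- Abort-lifting gamma for termination: `γ_N(N, E) = N ∪ (E × state)`. -/
def gammaN {σ : Type*} (N : Set (σ × σ)) (E : Set σ) : Set (σ × σ) :=
  N ∪ {p | p.1 ∈ E}

/-!
Follow a run of the target loop from its start. As long as every step is a source step, the run
is a source run. At the first step that is only justified by the abort clause of `γ_N`, the
source has reached an aborting state through source iterations, so the start state lies in
`(test tst ∘ Ns)* E_s` and any final state is allowed.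
-/

section

variable {σ : Type*}

theorem relComp_mono_left {R₁ R₂ : Set (σ × σ)} (h : R₁ ⊆ R₂) (T : Set (σ × σ)) :
    relComp R₁ T ⊆ relComp R₂ T := by
  rintro p ⟨m, hm, hT⟩
  exact ⟨m, h hm, hT⟩

theorem relComp_gammaN_subset (N T : Set (σ × σ)) (E : Set σ) :
    relComp (gammaN N E) T ⊆ gammaN (relComp N T) E := by
  rintro p ⟨m, hN | hE, hT⟩
  · exact Or.inl ⟨m, hN, hT⟩
  · exact Or.inr hE

theorem test_relComp_subset_gammaN {R S : Set (σ × σ)} {E : Set σ} (h : R ⊆ gammaN S E)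
    (X : Set σ) : relComp (test X) R ⊆ gammaN (relComp (test X) S) E := by
  rintro ⟨a, b⟩ ⟨m, ⟨ha, ham : a = m⟩, hR⟩
  subst ham
  rcases h hR with hS | hE
  · exact Or.inl ⟨a, ⟨ha, rfl⟩, hS⟩
  · exact Or.inr hE

theorem relStar_subset_gammaN {R S : Set (σ × σ)} {E : Set σ} (h : R ⊆ gammaN S E) :
    relStar R ⊆ gammaN (relStar S) (relApp (relStar S) E) := by
  rintro ⟨a, b⟩ (hab : Relation.ReflTransGen _ a b)
  induction hab using Relation.ReflTransGen.head_induction_on with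
  | refl => exact Or.inl Relation.ReflTransGen.refl
  | @head c d hcd _ ih =>
    rcases h hcd with hS | hE
    · rcases ih with hdb | ⟨e, hde, he⟩
      · exact Or.inl (Relation.ReflTransGen.head hS hdb)
      · exact Or.inr ⟨e, Relation.ReflTransGen.head hS hde, he⟩
    · exact Or.inr ⟨c, Relation.ReflTransGen.refl, hE⟩

end

theorem while_refines_general {state : Type*}
    (Nt Ns : Set (state × state)) (Es : Set state)
    (hN : Nt ⊆ gammaN Ns Es)
    (tst ffs : Set state) :
    relComp (relStar (relComp (test tst) Nt)) (test ffs) ⊆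
      gammaN (relComp (relStar (relComp (test tst) Ns)) (test ffs))
        (relApp (relStar (relComp (test tst) Ns)) Es) :=
  (relComp_mono_left (relStar_subset_gammaN (test_relComp_subset_gammaN hN tst)) _).trans
    (relComp_gammaN_subset _ _ _)

/-- While-loop refinement for abort-extended semantics. -/
theorem while_refines {state : Type*}
    (Nt Ns : Set (state × state)) (Dt Ds Et Es : Set state)
    (hN : Nt ⊆ gammaN Ns Es)
    (hD : Dt ⊆ Ds ∪ Es)
    (hE : Et ⊆ Es)
    (tst ffs : Set state) :
    relComp (relStar (relComp (test tst) Nt)) (test ffs) ⊆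
      gammaN (relComp (relStar (relComp (test tst) Ns)) (test ffs))
        (relApp (relStar (relComp (test tst) Ns)) Es) :=
  while_refines_general Nt Ns Es hN tst ffs
end

section
/- Star-preservation of the simple abort-lifting gamma: for γ_N(N, E) = N ∪ (E × state) (relations) and γ_D(D, E) = D ∪ E (sets), we have (γ_N(N₁, E₁))* ∘ γ_D(D₂, E₂) ⊆ γ_D(N₁* ∘ D₂, N₁* ∘ (E₁ ∪ E₂)), where * is reflexive transitive closure of a relation and R ∘ X = {σ | ∃ σ', (σ,σ') ∈ R ∧ σ' ∈ X}. -/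
/-- Abort-lifting gamma for sets: `γ_D(D, E) = D ∪ E`. -/
def gammaD {σ : Type*} (D E : Set σ) : Set σ := D ∪ E

/- Cut a `γ_N(N₁, E₁)`-path at its first step that is not an `N₁`-step: that step leaves a state
of `E₁`, reached from the start by `N₁*`, and what follows it no longer matters. -/
theorem Relation.ReflTransGen.or_exists_of_sup_abort {α : Type*} {r : α → α → Prop}
    {p : α → Prop} {a b : α} (h : ReflTransGen (fun x y => r x y ∨ p x) a b) :
    ReflTransGen r a b ∨ ∃ c, ReflTransGen r a c ∧ p c := by
  induction h using ReflTransGen.head_induction_on with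
  | refl => exact Or.inl .refl
  | head hstep _ ih =>
    rcases hstep with hr | hp
    · exact ih.imp (.head hr) fun ⟨c, hc, hpc⟩ => ⟨c, .head hr hc, hpc⟩
    · exact Or.inr ⟨_, .refl, hp⟩

section relApp

variable {σ : Type*}

theorem relApp_union (R : Set (σ × σ)) (X Y : Set σ) :
    relApp R (X ∪ Y) = relApp R X ∪ relApp R Y := by
  ext a
  simp only [relApp, Set.mem_union, Set.mem_ofPred_eq, and_or_left, exists_or]

theorem relApp_relStar_gammaN_subset (N : Set (σ × σ)) (E X : Set σ) :
    relApp (relStar (gammaN N E)) X ⊆ relApp (relStar N) X ∪ relApp (relStar N) E := by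
  rintro a ⟨b, hab, hb⟩
  rcases Relation.ReflTransGen.or_exists_of_sup_abort hab with hN | ⟨c, hac, hc⟩
  · exact Or.inl ⟨b, hN, hb⟩
  · exact Or.inr ⟨c, hac, hc⟩

end relApp

/-- Star-preservation of the simple abort-lifting gamma. -/
theorem gammaN_star {state : Type*}
    (N₁ : Set (state × state)) (D₂ E₁ E₂ : Set state) :
    relApp (relStar (gammaN N₁ E₁)) (gammaD D₂ E₂) ⊆
      gammaD (relApp (relStar N₁) D₂) (relApp (relStar N₁) (E₁ ∪ E₂)) := by
  refine (relApp_relStar_gammaN_subset N₁ E₁ (D₂ ∪ E₂)).trans ?_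
  simp only [gammaD, relApp_union]
  exact Set.union_subset (Set.union_subset_union_right _ Set.subset_union_right)
    (Set.subset_union_of_subset_right Set.subset_union_left _)
end

section
/- Trace-refinement gamma is concatenation-preserved: let trace be finite event lists and let γ(N, E) = {(σ, τ, σ') | (σ, τ, σ') ∈ N ∨ ∃ τ₀, (σ, τ₀) ∈ E ∧ τ₀ is a prefix of τ} for N ⊆ state × trace × state and E ⊆ state × trace. Then γ(N₁, E₁) ∘ γ(N₂, E₂) ⊆ γ(N₁ ∘ N₂, E₁ ∪ (N₁ ∘ E₂)), where ∘ on ternary relations splits traces by concatenation and N ∘ E = {(σ, τ) | ∃ σ' τ₁ τ₂, (σ, τ₁, σ') ∈ N ∧ (σ', τ₂) ∈ E ∧ τ = τ₁ ++ τ₂}. -/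
/-!
A composed run either stays normal in both halves, and is then a normal run of `N₁ ∘ N₂`, or one
half errors. An error of the first half on a prefix of `τ₁` is an error of `E₁` on a prefix of
`τ₁ ++ τ₂`; an error of the second half on a prefix `τ₀` of `τ₂`, after a normal run `τ₁` of the
first, is an error of `N₁ ∘ E₂` on `τ₁ ++ τ₀`, a prefix of `τ₁ ++ τ₂`.
-/

/-- Trace-concatenating composition of ternary relations. -/
def tcomp {state event : Type*}
    (R₁ R₂ : Set (state × List event × state)) :
    Set (state × List event × state) :=
  {p | ∃ σ₂ τ₁ τ₂, (p.1, τ₁, σ₂) ∈ R₁ ∧ (σ₂, τ₂, p.2.2) ∈ R₂ ∧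
    p.2.1 = τ₁ ++ τ₂}

/-- Composition of a ternary relation with an erroring set:
`N ∘ E = {(σ, τ) | ∃ σ' τ₁ τ₂, (σ,τ₁,σ') ∈ N ∧ (σ',τ₂) ∈ E ∧ τ = τ₁ ++ τ₂}`. -/
def tcompE {state event : Type*}
    (N : Set (state × List event × state)) (E : Set (state × List event)) :
    Set (state × List event) :=
  {p | ∃ σ' τ₁ τ₂, (p.1, τ₁, σ') ∈ N ∧ (σ', τ₂) ∈ E ∧ p.2 = τ₁ ++ τ₂}

/-- Trace-refinement gamma (termination instance 2). -/
def gammaT {state event : Type*}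
    (N : Set (state × List event × state)) (E : Set (state × List event)) :
    Set (state × List event × state) :=
  {p | p ∈ N ∨ ∃ τ₀, (p.1, τ₀) ∈ E ∧ ∃ τ₁, p.2.1 = τ₀ ++ τ₁}

section

variable {state event : Type*} {N : Set (state × List event × state)} {E : Set (state × List event)}

theorem mem_gammaT_iff {p : state × List event × state} :
    p ∈ gammaT N E ↔ p ∈ N ∨ ∃ τ₀, (p.1, τ₀) ∈ E ∧ τ₀ <+: p.2.1 := by
  simp only [gammaT, Set.mem_ofPred_eq, List.IsPrefix, eq_comm]

theorem subset_gammaT : N ⊆ gammaT N E := fun _ => Or.inl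

theorem mem_gammaT_of_prefix {σ σ' : state} {τ₀ τ : List event} (hE : (σ, τ₀) ∈ E)
    (hτ : τ₀ <+: τ) : (σ, τ, σ') ∈ gammaT N E :=
  mem_gammaT_iff.2 (Or.inr ⟨τ₀, hE, hτ⟩)

end

/-- Trace-refinement gamma is concatenation-preserved. -/
theorem gammaT_comp {state event : Type*}
    (N₁ N₂ : Set (state × List event × state))
    (E₁ E₂ : Set (state × List event)) :
    tcomp (gammaT N₁ E₁) (gammaT N₂ E₂) ⊆
      gammaT (tcomp N₁ N₂) (E₁ ∪ tcompE N₁ E₂) := by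
  rintro ⟨σ, _, σ'⟩ ⟨σ₂, τ₁, τ₂, h₁, h₂, rfl⟩
  rcases mem_gammaT_iff.1 h₁ with h₁ | ⟨τ₀, hE₁, hτ₀⟩
  · rcases mem_gammaT_iff.1 h₂ with h₂ | ⟨τ₀, hE₂, hτ₀⟩
    · exact subset_gammaT ⟨σ₂, τ₁, τ₂, h₁, h₂, rfl⟩
    · exact mem_gammaT_of_prefix (Or.inr ⟨σ₂, τ₁, τ₀, h₁, hE₂, rfl⟩)
        ((List.prefix_append_right_inj τ₁).2 hτ₀)
  · exact mem_gammaT_of_prefix (Or.inl hE₁) (hτ₀.trans (List.prefix_append τ₁ τ₂))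
end

section
/- The Kripke-relation gamma is concatenation-preserved when ⤳ is transitive: with γ_N as in the previous statement and ⤳ a preorder on W, and with trace-splitting composition on ternary relations, γ_N(N₁, E₁) ∘ γ_N(N₂, E₂) ⊆ γ_N(N₁ ∘ N₂, E₁ ∪ (N₁ ∘ E₂)), where N ∘ E = {(σ, τ) | ∃ σ' τ₁ τ₂, (σ, τ₁, σ') ∈ N ∧ (σ', τ₂) ∈ E ∧ τ = τ₁ ++ τ₂}. -/
/-- Kripke-relation gamma for CompCert statement refinement. -/
def gammaK {W state_s state_t event : Type*}
    (R : W → Set (state_s × state_t)) (acc : W → W → Prop)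
    (N : Set (state_s × List event × state_s))
    (E : Set (state_s × List event)) :
    Set (state_t × List event × state_t) :=
  {p | ∀ σs w, (σs, p.1) ∈ R w →
    (∃ w' σs', (σs, p.2.1, σs') ∈ N ∧ acc w w' ∧ (σs', p.2.2) ∈ R w') ∨
    (∃ τ₀, (σs, τ₀) ∈ E ∧ ∃ τ₁, p.2.1 = τ₀ ++ τ₁)}

theorem gammaK_comp_general {W state_s state_t event : Type*}
    (R : W → Set (state_s × state_t)) (acc : W → W → Prop)
    (htrans : ∀ w₁ w₂ w₃, acc w₁ w₂ → acc w₂ w₃ → acc w₁ w₃)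
    (N₁ N₂ : Set (state_s × List event × state_s))
    (E₁ E₂ : Set (state_s × List event)) :
    tcomp (gammaK (state_t := state_t) R acc N₁ E₁)
        (gammaK (state_t := state_t) R acc N₂ E₂) ⊆
      gammaK (state_t := state_t) R acc (tcomp N₁ N₂)
        (E₁ ∪ tcompE N₁ E₂) := by
  rintro ⟨σt, _, σt'⟩ ⟨σm, τ₁, τ₂, h₁, h₂, rfl⟩ σs w hR
  rcases h₁ σs w hR with ⟨w₁, σs₁, hN₁, hw₁, hR₁⟩ | ⟨τ₀, hE₁, τr, rfl⟩
  · rcases h₂ σs₁ w₁ hR₁ with ⟨w₂, σs₂, hN₂, hw₂, hR₂⟩ | ⟨τ₀, hE₂, τr, rfl⟩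
    · exact Or.inl ⟨w₂, σs₂, ⟨σs₁, τ₁, τ₂, hN₁, hN₂, rfl⟩, htrans _ _ _ hw₁ hw₂, hR₂⟩
    · exact Or.inr ⟨τ₁ ++ τ₀, Or.inr ⟨σs₁, τ₁, τ₀, hN₁, hE₂, rfl⟩, τr,
        (List.append_assoc _ _ _).symm⟩
  · exact Or.inr ⟨τ₀, Or.inl hE₁, τr ++ τ₂, List.append_assoc _ _ _⟩

/-- The Kripke-relation gamma is concatenation-preserved when the
accessibility relation is a preorder. -/
theorem gammaK_comp {W state_s state_t event : Type*}
    (R : W → Set (state_s × state_t)) (acc : W → W → Prop)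
    (hrefl : ∀ w, acc w w)
    (htrans : ∀ w₁ w₂ w₃, acc w₁ w₂ → acc w₂ w₃ → acc w₁ w₃)
    (N₁ N₂ : Set (state_s × List event × state_s))
    (E₁ E₂ : Set (state_s × List event)) :
    tcomp (gammaK (state_t := state_t) R acc N₁ E₁)
        (gammaK (state_t := state_t) R acc N₂ E₂) ⊆
      gammaK (state_t := state_t) R acc (tcomp N₁ N₂)
        (E₁ ∪ tcompE N₁ E₂) :=
  gammaK_comp_general R acc htrans N₁ N₂ E₁ E₂
end
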